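/- arXiv:1906.05527 — 3 statements merged into one kernel-verified Lean document; each statement's English description precedes it below -/
import Mathlib

section
/- Let f : ℝ^n → ℝ have L_f-Lipschitz continuous gradient and let μ > 0. Then the Gaussian smoothing f_μ also has L_f-Lipschitz continuous gradient, and for every x ∈ ℝ^n one has |f_μ(x) − f(x)| ≤ (μ²/2)·L_f·n and ‖∇f_μ(x) − ∇f(x)‖ ≤ (μ/2)·L_f·(n+3)^{3/2}. -/
open MeasureTheory ProbabilityTheory Real
open scoped BigOperators ENNReal RealInnerProductSpace

noncomputable section

/-- Standard Gaussian measure `N(0, I_n)` on `EuclideanSpace ℝ (Fin n)`. -/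
def stdGaussian (n : ℕ) : Measure (EuclideanSpace ℝ (Fin n)) :=
  (Measure.pi fun _ : Fin n => gaussianReal 0 1).map
    (MeasurableEquiv.toLp 2 (Fin n → ℝ))

/-- Gaussian smoothing `f_μ(x) = E_u[f(x + μ u)]`, `u ~ N(0, I_n)`. -/
def gsmooth {n : ℕ} (μ : ℝ) (f : EuclideanSpace ℝ (Fin n) → ℝ)
    (x : EuclideanSpace ℝ (Fin n)) : ℝ :=
  ∫ u, f (x + μ • u) ∂(stdGaussian n)

/-!
Differentiating under the integral sign gives `∇f_μ(x) = E ∇f(x + μu)`, an average of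
`L`-Lipschitz maps, hence `L`-Lipschitz. Since `E u = 0`, `f_μ(x) - f(x)` is the mean of the
Taylor remainder `f(x + μu) - f(x) - ⟪∇f(x), μu⟫`, bounded by `L μ² ‖u‖² / 2`, and
`E ‖u‖² = n`. Similarly `‖∇f_μ(x) - ∇f(x)‖ ≤ L μ E ‖u‖ ≤ L μ √n`, which is at most
`(μ / 2) L (n + 3) ^ (3 / 2)`.
-/

open scoped NNReal

theorem LipschitzWith.norm_le_norm_add_mul_norm_sub {E F : Type*} [SeminormedAddCommGroup E]
    [SeminormedAddCommGroup F] {g : E → F} {K : ℝ≥0} (hg : LipschitzWith K g) (x y : E) :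
    ‖g y‖ ≤ ‖g x‖ + K * ‖y - x‖ :=
  (norm_le_norm_add_norm_sub' _ _).trans (by gcongr; exact hg.norm_sub_le y x)

section LipschitzFDeriv

variable {E F : Type*} [NormedAddCommGroup E] [NormedSpace ℝ E] [NormedAddCommGroup F]
  [NormedSpace ℝ F] {f : E → F} {L : ℝ≥0}

theorem norm_sub_sub_fderiv_le_of_lipschitzWith_fderiv (hf : Differentiable ℝ f)
    (hL : LipschitzWith L (fderiv ℝ f)) (x y : E) :
    ‖f y - f x - fderiv ℝ f x (y - x)‖ ≤ L / 2 * ‖y - x‖ ^ 2 := by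
  set d := y - x
  have hφ : ∀ t : ℝ, HasDerivAt (fun t : ℝ => f (x + t • d) - f x - t • fderiv ℝ f x d)
      (fderiv ℝ f (x + t • d) d - fderiv ℝ f x d) t := fun t => by
    have hline : HasDerivAt (fun t : ℝ => x + t • d) d t := by
      simpa using ((hasDerivAt_id t).smul_const d).const_add x
    exact ((((hf _).hasFDerivAt.comp_hasDerivAt t hline).sub_const (f x)).sub
      ((hasDerivAt_id t).smul_const (fderiv ℝ f x d))).congr_deriv (by simp)
  have hB : ∀ t : ℝ, HasDerivAt (fun t : ℝ => L / 2 * ‖d‖ ^ 2 * t ^ 2) (L * ‖d‖ ^ 2 * t) t :=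
    fun t => ((hasDerivAt_pow 2 t).const_mul (L / 2 * ‖d‖ ^ 2)).congr_deriv (by ring)
  have hφ_le := image_norm_le_of_norm_deriv_right_le_deriv_boundary (a := 0) (b := 1)
    (fun t _ => (hφ t).continuousAt.continuousWithinAt) (fun t _ => (hφ t).hasDerivWithinAt)
    (by simp) hB (fun t ht => ?_) (Set.right_mem_Icc.2 zero_le_one)
  · simpa [d] using hφ_le
  · calc ‖fderiv ℝ f (x + t • d) d - fderiv ℝ f x d‖
        = ‖(fderiv ℝ f (x + t • d) - fderiv ℝ f x) d‖ := rfl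
      _ ≤ ‖fderiv ℝ f (x + t • d) - fderiv ℝ f x‖ * ‖d‖ := ContinuousLinearMap.le_opNorm _ _
      _ ≤ L * ‖x + t • d - x‖ * ‖d‖ := by gcongr; exact hL.norm_sub_le _ _
      _ = L * ‖d‖ ^ 2 * t := by
        rw [add_sub_cancel_left, norm_smul, Real.norm_of_nonneg ht.1]; ring

end LipschitzFDeriv

def smoothing {E F : Type*} [NormedAddCommGroup E] [NormedSpace ℝ E] [MeasurableSpace E]
    [NormedAddCommGroup F] [NormedSpace ℝ F] (ν : Measure E) (μ : ℝ) (f : E → F) (x : E) : F :=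
  ∫ u, f (x + μ • u) ∂ν

section Smoothing

variable {E F : Type*} [NormedAddCommGroup E] [NormedSpace ℝ E] [MeasurableSpace E]
  [BorelSpace E] [SecondCountableTopology E] [NormedAddCommGroup F] [NormedSpace ℝ F]
  {ν : Measure E} [IsProbabilityMeasure ν] {f : E → F} {L : ℝ≥0}

theorem integrable_comp_add_smul (hf : Differentiable ℝ f)
    (hL : LipschitzWith L (fderiv ℝ f)) (hν : MemLp id 2 ν) (x : E) (μ : ℝ) :
    Integrable (fun u => f (x + μ • u)) ν := by
  refine Integrable.mono' (((integrable_const ‖f x‖).add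
      ((hν.integrable one_le_two).norm.const_mul (‖fderiv ℝ f x‖ * |μ|))).add
      (((memLp_two_iff_integrable_sq_norm hν.1).1 hν).const_mul (L / 2 * μ ^ 2)))
    (hf.continuous.comp (by fun_prop)).aestronglyMeasurable (ae_of_all _ fun u => ?_)
  have hTaylor := norm_sub_sub_fderiv_le_of_lipschitzWith_fderiv hf hL x (x + μ • u)
  rw [add_sub_cancel_left, norm_smul, Real.norm_eq_abs, mul_pow, sq_abs] at hTaylor
  have hlin : ‖fderiv ℝ f x (μ • u)‖ ≤ ‖fderiv ℝ f x‖ * |μ| * ‖u‖ := by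
    simpa [norm_smul, mul_assoc] using (fderiv ℝ f x).le_opNorm (μ • u)
  calc ‖f (x + μ • u)‖
      = ‖f x + fderiv ℝ f x (μ • u) + (f (x + μ • u) - f x - fderiv ℝ f x (μ • u))‖ := by
        congr 1; abel
    _ ≤ ‖f x‖ + ‖fderiv ℝ f x (μ • u)‖ + ‖f (x + μ • u) - f x - fderiv ℝ f x (μ • u)‖ :=
        norm_add₃_le
    _ ≤ _ := by simp only [Pi.add_apply, id]; linarith

theorem integrable_fderiv_comp_add_smul (hL : LipschitzWith L (fderiv ℝ f))
    (hν : MemLp id 2 ν) (x : E) (μ : ℝ) : Integrable (fun u => fderiv ℝ f (x + μ • u)) ν := by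
  refine Integrable.mono' ((integrable_const ‖fderiv ℝ f x‖).add
      ((hν.integrable one_le_two).norm.const_mul (L * |μ|)))
    (hL.continuous.comp (by fun_prop)).aestronglyMeasurable (ae_of_all _ fun u => ?_)
  have := hL.norm_le_norm_add_mul_norm_sub x (x + μ • u)
  rw [add_sub_cancel_left, norm_smul, Real.norm_eq_abs] at this
  simpa [mul_assoc] using this

theorem hasFDerivAt_smoothing [CompleteSpace F] (hf : Differentiable ℝ f)
    (hL : LipschitzWith L (fderiv ℝ f)) (hν : MemLp id 2 ν) (μ : ℝ) (x₀ : E) :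
    HasFDerivAt (smoothing ν μ f) (∫ u, fderiv ℝ f (x₀ + μ • u) ∂ν) x₀ := by
  refine hasFDerivAt_integral_of_dominated_of_fderiv_le (Metric.ball_mem_nhds x₀ one_pos)
    (F := fun x u => f (x + μ • u)) (F' := fun x u => fderiv ℝ f (x + μ • u))
    (bound := fun u => ‖fderiv ℝ f x₀‖ + L * (1 + |μ| * ‖u‖))
    (.of_forall fun x => (hf.continuous.comp (by fun_prop)).aestronglyMeasurable)
    (integrable_comp_add_smul hf hL hν x₀ μ)
    (integrable_fderiv_comp_add_smul hL hν x₀ μ).aestronglyMeasurable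
    (ae_of_all _ fun u x hx => ?_)
    ((integrable_const _).add
      (((integrable_const 1).add ((hν.integrable one_le_two).norm.const_mul |μ|)).const_mul L))
    (ae_of_all _ fun u x _ => ?_)
  · refine (hL.norm_le_norm_add_mul_norm_sub x₀ _).trans ?_
    gcongr
    calc ‖x + μ • u - x₀‖ ≤ ‖x - x₀‖ + ‖μ • u‖ := by
          rw [add_sub_right_comm]; exact norm_add_le _ _
      _ ≤ 1 + |μ| * ‖u‖ := by
          rw [norm_smul, Real.norm_eq_abs, ← dist_eq_norm]
          exact add_le_add_left (Metric.mem_ball.1 hx).le _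
  · exact (hf _).hasFDerivAt.comp x ((hasFDerivAt_id x).add_const (μ • u))

theorem fderiv_smoothing [CompleteSpace F] (hf : Differentiable ℝ f)
    (hL : LipschitzWith L (fderiv ℝ f)) (hν : MemLp id 2 ν) (μ : ℝ) :
    fderiv ℝ (smoothing ν μ f) = fun x => ∫ u, fderiv ℝ f (x + μ • u) ∂ν :=
  funext fun x => (hasFDerivAt_smoothing hf hL hν μ x).fderiv

theorem lipschitzWith_fderiv_smoothing [CompleteSpace F] (hf : Differentiable ℝ f)
    (hL : LipschitzWith L (fderiv ℝ f)) (hν : MemLp id 2 ν) (μ : ℝ) :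
    LipschitzWith L (fderiv ℝ (smoothing ν μ f)) := by
  rw [fderiv_smoothing hf hL hν, lipschitzWith_iff_norm_sub_le]
  intro x y
  rw [← integral_sub (integrable_fderiv_comp_add_smul hL hν x μ)
    (integrable_fderiv_comp_add_smul hL hν y μ)]
  refine (norm_integral_le_of_norm_le_const (C := L * ‖x - y‖) (ae_of_all _ fun u => ?_)).trans_eq
    (by simp)
  simpa using hL.norm_sub_le (x + μ • u) (y + μ • u)

theorem norm_smoothing_sub_le [CompleteSpace E] [CompleteSpace F] (hf : Differentiable ℝ f)
    (hL : LipschitzWith L (fderiv ℝ f)) (hν : MemLp id 2 ν) (hcenter : ∫ u, u ∂ν = 0)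
    (μ : ℝ) (x : E) :
    ‖smoothing ν μ f x - f x‖ ≤ L / 2 * μ ^ 2 * ∫ u, ‖u‖ ^ 2 ∂ν := by
  have hint := integrable_comp_add_smul hf hL hν x μ
  have hid : Integrable (fun u : E => u) ν := hν.integrable one_le_two
  have hlin_int : Integrable (fun u => fderiv ℝ f x (μ • u)) ν :=
    (fderiv ℝ f x).integrable_comp (hid.smul μ)
  have hlin : ∫ u, fderiv ℝ f x (μ • u) ∂ν = 0 := by
    simp_rw [map_smul]
    rw [integral_smul, (fderiv ℝ f x).integral_comp_comm hid, hcenter, map_zero, smul_zero]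
  have hrepr : smoothing ν μ f x - f x
      = ∫ u, (f (x + μ • u) - f x - fderiv ℝ f x (μ • u)) ∂ν := by
    rw [integral_sub (f := fun u => f (x + μ • u) - f x) (hint.sub (integrable_const _)) hlin_int,
      integral_sub hint (integrable_const _), hlin, integral_const]
    simp [smoothing]
  rw [hrepr, ← integral_const_mul]
  refine norm_integral_le_of_norm_le
    (((memLp_two_iff_integrable_sq_norm hν.1).1 hν).const_mul _) (ae_of_all _ fun u => ?_)
  have := norm_sub_sub_fderiv_le_of_lipschitzWith_fderiv hf hL x (x + μ • u)
  rwa [add_sub_cancel_left, norm_smul, Real.norm_eq_abs, mul_pow, sq_abs, ← mul_assoc] at this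

theorem norm_fderiv_smoothing_sub_le [CompleteSpace F] (hf : Differentiable ℝ f)
    (hL : LipschitzWith L (fderiv ℝ f)) (hν : MemLp id 2 ν) (μ : ℝ) (x : E) :
    ‖fderiv ℝ (smoothing ν μ f) x - fderiv ℝ f x‖ ≤ L * |μ| * ∫ u, ‖u‖ ∂ν := by
  have hconst : fderiv ℝ f x = ∫ _u, fderiv ℝ f x ∂ν := by simp
  rw [fderiv_smoothing hf hL hν, hconst,
    ← integral_sub (integrable_fderiv_comp_add_smul hL hν x μ) (integrable_const _),
    ← integral_const_mul]
  refine norm_integral_le_of_norm_le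
    ((hν.integrable one_le_two).norm.const_mul _) (ae_of_all _ fun u => ?_)
  have := hL.norm_sub_le (x + μ • u) x
  rwa [add_sub_cancel_left, norm_smul, Real.norm_eq_abs, ← mul_assoc] at this

end Smoothing

theorem integral_norm_le_sqrt_integral_norm_sq {Ω E : Type*} [MeasurableSpace Ω]
    [NormedAddCommGroup E] {P : Measure Ω} [IsProbabilityMeasure P] {X : Ω → E}
    (hX : MemLp X 2 P) : ∫ ω, ‖X ω‖ ∂P ≤ √(∫ ω, ‖X ω‖ ^ 2 ∂P) := by
  have hvar := variance_nonneg (fun ω => ‖X ω‖) P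
  rw [variance_eq_sub hX.norm] at hvar
  exact Real.le_sqrt_of_sq_le (by simpa using hvar)

section StdGaussian

variable {E : Type*} [NormedAddCommGroup E] [InnerProductSpace ℝ E] [FiniteDimensional ℝ E]
  [MeasurableSpace E] [BorelSpace E]

theorem integral_norm_sq_stdGaussian :
    ∫ x, ‖x‖ ^ 2 ∂(ProbabilityTheory.stdGaussian E) = Module.finrank ℝ E := by
  let b := stdOrthonormalBasis ℝ E
  have hcoord : ∀ i, ∫ x, ⟪b i, x⟫ ^ 2 ∂(ProbabilityTheory.stdGaussian E) = 1 := fun i => by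
    have h := variance_dual_stdGaussian (innerSL ℝ (b i))
    rw [variance_of_integral_eq_zero (by fun_prop) (integral_strongDual_stdGaussian _)] at h
    simpa [b.norm_eq_one] using h
  simp_rw [← b.sum_sq_inner_right]
  rw [integral_finsetSum (f := fun i x => ⟪b i, x⟫ ^ 2) _ fun i _ =>
    (IsGaussian.memLp_dual _ (innerSL ℝ (b i)) 2 (by simp)).integrable_sq]
  simp [hcoord]

theorem integral_norm_stdGaussian_le :
    ∫ x, ‖x‖ ∂(ProbabilityTheory.stdGaussian E) ≤ √(Module.finrank ℝ E) :=
  integral_norm_le_sqrt_integral_norm_sq (X := id) IsGaussian.memLp_two_id |>.trans_eq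
    (by rw [← integral_norm_sq_stdGaussian]; rfl)

end StdGaussian

theorem gsmooth_eq_smoothing {n : ℕ} (μ : ℝ) (f : EuclideanSpace ℝ (Fin n) → ℝ) :
    gsmooth μ f = smoothing (ProbabilityTheory.stdGaussian (EuclideanSpace ℝ (Fin n))) μ f := by
  rw [← map_pi_eq_stdGaussian]; rfl

section Gradient

variable {E : Type*} [NormedAddCommGroup E] [InnerProductSpace ℝ E] [CompleteSpace E]

theorem norm_gradient_sub_gradient (f g : E → ℝ) (x y : E) :
    ‖gradient f x - gradient g y‖ = ‖fderiv ℝ f x - fderiv ℝ g y‖ := by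
  simp only [gradient, ← map_sub, LinearIsometryEquiv.norm_map]

theorem lipschitzWith_gradient_iff {f : E → ℝ} {K : ℝ≥0} :
    LipschitzWith K (gradient f) ↔ LipschitzWith K (fderiv ℝ f) := by
  simp only [lipschitzWith_iff_norm_sub_le, norm_gradient_sub_gradient]

end Gradient

theorem two_mul_sqrt_le_add_three_rpow {x : ℝ} (hx : 0 ≤ x) :
    2 * √x ≤ (x + 3) ^ ((3 : ℝ) / 2) := by
  rw [Real.rpow_div_two_eq_sqrt 3 (by linarith), Real.rpow_ofNat]
  have h1 : √x ≤ √(x + 3) := Real.sqrt_le_sqrt (by linarith)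
  have h2 : √(x + 3) ^ 2 = x + 3 := Real.sq_sqrt (by linarith)
  nlinarith [Real.sqrt_nonneg x, Real.sqrt_nonneg (x + 3)]

/-- Nesterov's smoothing lemma, parts (a)–(b).
If `f` has an `L_f`-Lipschitz gradient and `μ > 0`, then the Gaussian smoothing `f_μ`
also has an `L_f`-Lipschitz gradient, `|f_μ(x) − f(x)| ≤ (μ²/2)·L_f·n` and
`‖∇f_μ(x) − ∇f(x)‖ ≤ (μ/2)·L_f·(n+3)^{3/2}` for every `x`. -/
theorem statement0 {n : ℕ} (f : EuclideanSpace ℝ (Fin n) → ℝ) (Lf μ : ℝ)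
    (hLf : 0 ≤ Lf) (hμ : 0 < μ)
    (hdiff : Differentiable ℝ f)
    (hlip : LipschitzWith Lf.toNNReal (gradient f)) :
    Differentiable ℝ (gsmooth μ f) ∧
    LipschitzWith Lf.toNNReal (gradient (gsmooth μ f)) ∧
    (∀ x, |gsmooth μ f x - f x| ≤ μ ^ 2 / 2 * Lf * n) ∧
    (∀ x, ‖gradient (gsmooth μ f) x - gradient f x‖ ≤
      μ / 2 * Lf * ((n : ℝ) + 3) ^ ((3 : ℝ) / 2)) := by
  have hν : MemLp id 2 (ProbabilityTheory.stdGaussian (EuclideanSpace ℝ (Fin n))) :=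
    IsGaussian.memLp_two_id
  have hL : LipschitzWith Lf.toNNReal (fderiv ℝ f) := lipschitzWith_gradient_iff.1 hlip
  have hLf' : (Lf.toNNReal : ℝ) = Lf := Real.coe_toNNReal _ hLf
  rw [gsmooth_eq_smoothing]
  refine ⟨fun x => (hasFDerivAt_smoothing hdiff hL hν μ x).differentiableAt,
    lipschitzWith_gradient_iff.2 (lipschitzWith_fderiv_smoothing hdiff hL hν μ),
    fun x => ?_, fun x => ?_⟩
  · have h := norm_smoothing_sub_le hdiff hL hν
      (integral_id_stdGaussian (E := EuclideanSpace ℝ (Fin n))) μ x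
    rw [integral_norm_sq_stdGaussian, finrank_euclideanSpace_fin, hLf', Real.norm_eq_abs] at h
    linarith
  · rw [norm_gradient_sub_gradient]
    calc _ ≤ Lf * |μ| * ∫ u, ‖u‖ ∂ProbabilityTheory.stdGaussian (EuclideanSpace ℝ (Fin n)) :=
          hLf' ▸ norm_fderiv_smoothing_sub_le hdiff hL hν μ x
      _ ≤ Lf * μ * √n := by
          rw [abs_of_pos hμ]
          gcongr
          simpa using integral_norm_stdGaussian_le (E := EuclideanSpace ℝ (Fin n))
      _ ≤ _ := by
          nlinarith [two_mul_sqrt_le_add_three_rpow n.cast_nonneg, mul_nonneg hLf hμ.le]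
end
end

section
/- Let f : ℝ^n → ℝ have L_f-Lipschitz continuous gradient and let μ > 0. Then for every x ∈ ℝ^n, (1/μ²)·E_u[(f(x + μu) − f(x))²·‖u‖²] ≤ (μ²/2)·L_f²·(n+6)³ + 2(n+4)·‖∇f(x)‖², where u is a standard Gaussian random vector in ℝ^n. -/
open MeasureTheory ProbabilityTheory Real
open scoped BigOperators ENNReal RealInnerProductSpace

noncomputable section

/-!
An `L`-Lipschitz gradient gives the second-order Taylor bound
`|f (x + v) - f x - ⟪∇f x, v⟫| ≤ L/2 ‖v‖²`, hence
`(f (x + μ u) - f x)² ≤ μ² (2 ⟪∇f x, u⟫² + L² μ² ‖u‖⁴ / 2)`. Integrating against `‖u‖²`, everything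
reduces to the Gaussian moments `E[⟪g, u⟫² ‖u‖²] = (n + 2) ‖g‖²` and
`E ‖u‖⁶ = n (n + 2) (n + 4) ≤ (n + 6)³`. Both are computed in coordinates, after rotating `g` onto
the first vector of an orthonormal basis: splitting `‖u‖² = u₀² + ‖u'‖²` with `u₀` and `u'`
independent, the moments of `‖u‖²` in dimension `d + 1` follow from those in dimension `d` and
the one-dimensional recursion `E[x^(k+2)] = (k + 1) E[x^k]` (Gaussian integration by parts).
-/

open Finset
open scoped NNReal

local notation "𝒩[" d "]" => Measure.pi fun _ : Fin d => gaussianReal 0 1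

lemma hasDerivAt_gaussianPDFReal (x : ℝ) :
    HasDerivAt (gaussianPDFReal 0 1) (-x * gaussianPDFReal 0 1 x) x := by
  have hpdf : gaussianPDFReal 0 1 = fun x => (√(2 * π))⁻¹ * rexp (-x ^ 2 / 2) := by
    simp [gaussianPDFReal_def]
  have hexponent : HasDerivAt (fun x : ℝ => -x ^ 2 / 2) (-x) x :=
    ((hasDerivAt_pow 2 x).neg.div_const 2).congr_deriv (by ring)
  rw [hpdf]
  exact (hexponent.exp.const_mul _).congr_deriv (by ring)

lemma integrable_pow_gaussianReal (k : ℕ) :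
    Integrable (fun x : ℝ => x ^ k) (gaussianReal 0 1) := by
  rcases Nat.eq_zero_or_pos k with rfl | hk
  · simp
  exact ((memLp_id_gaussianReal k).integrable_norm_pow hk.ne').mono' (by fun_prop)
    (ae_of_all _ fun x => by simp [norm_pow])

lemma integrable_gaussianPDFReal_mul_pow (k : ℕ) :
    Integrable (fun x => gaussianPDFReal 0 1 x * x ^ k) := by
  have h := integrable_pow_gaussianReal k
  rw [gaussianReal_of_var_ne_zero 0 one_ne_zero, integrable_withDensity_iff_integrable_smul'
    (measurable_gaussianPDF 0 1) (ae_of_all _ fun _ => gaussianPDF_lt_top)] at h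
  simpa [toReal_gaussianPDF] using h

lemma integral_pow_add_two_gaussianReal (k : ℕ) :
    ∫ x, x ^ (k + 2) ∂gaussianReal 0 1 = (k + 1) * ∫ x, x ^ k ∂gaussianReal 0 1 := by
  simp only [integral_gaussianReal_eq_integral_smul one_ne_zero, smul_eq_mul]
  have ibp := integral_mul_deriv_eq_deriv_mul_of_integrable (u := fun x : ℝ => x ^ (k + 1))
    (u' := fun x => (k + 1) * x ^ k) (v := gaussianPDFReal 0 1)
    (v' := fun x => -x * gaussianPDFReal 0 1 x)
    (fun x _ => by simpa using hasDerivAt_pow (k + 1) x) (fun x _ => hasDerivAt_gaussianPDFReal x)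
    ((integrable_gaussianPDFReal_mul_pow (k + 2)).neg.congr
      (ae_of_all _ fun x => by simp only [Pi.neg_apply, Pi.mul_apply]; ring))
    (((integrable_gaussianPDFReal_mul_pow k).const_mul (k + 1)).congr
      (ae_of_all _ fun x => by simp only [Pi.mul_apply]; ring))
    ((integrable_gaussianPDFReal_mul_pow (k + 1)).congr
      (ae_of_all _ fun x => by simp only [Pi.mul_apply]; ring))
  have hlhs : ∀ x : ℝ, x ^ (k + 1) * (-x * gaussianPDFReal 0 1 x)
      = -(gaussianPDFReal 0 1 x * x ^ (k + 2)) := fun x => by ring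
  have hrhs : ∀ x : ℝ, (k + 1) * x ^ k * gaussianPDFReal 0 1 x
      = (k + 1) * (gaussianPDFReal 0 1 x * x ^ k) := fun x => by ring
  simpa only [hlhs, hrhs, integral_neg, neg_inj, integral_const_mul] using ibp

lemma integral_pow_two_gaussianReal : ∫ x, x ^ 2 ∂gaussianReal 0 1 = 1 := by
  simpa using integral_pow_add_two_gaussianReal 0

lemma integral_pow_four_gaussianReal : ∫ x, x ^ 4 ∂gaussianReal 0 1 = 3 := by
  rw [integral_pow_add_two_gaussianReal 2, integral_pow_two_gaussianReal]
  norm_num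

lemma integral_pow_six_gaussianReal : ∫ x, x ^ 6 ∂gaussianReal 0 1 = 15 := by
  rw [integral_pow_add_two_gaussianReal 4, integral_pow_four_gaussianReal]
  norm_num

section SplitFirstCoordinate

variable {α : Type*} [MeasurableSpace α] (μ : Measure α) [SigmaFinite μ] {d : ℕ}

lemma integral_mul_tail (f : α → ℝ) (g : (Fin d → α) → ℝ) :
    ∫ y, f (y 0) * g (Fin.tail y) ∂Measure.pi (fun _ : Fin (d + 1) => μ)
      = (∫ x, f x ∂μ) * ∫ y, g y ∂Measure.pi (fun _ : Fin d => μ) := by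
  rw [← integral_prod_mul, ← (measurePreserving_piFinSuccAbove (fun _ => μ) 0).integral_comp']
  rfl

lemma integrable_mul_tail {f : α → ℝ} {g : (Fin d → α) → ℝ} (hf : Integrable f μ)
    (hg : Integrable g (Measure.pi fun _ : Fin d => μ)) :
    Integrable (fun y => f (y 0) * g (Fin.tail y)) (Measure.pi fun _ : Fin (d + 1) => μ) :=
  ((measurePreserving_piFinSuccAbove (fun _ => μ) 0).integrable_comp_emb
    (MeasurableEquiv.measurableEmbedding _)).2 (hf.mul_prod hg)

end SplitFirstCoordinate

lemma integrable_norm_pow_stdGaussian {E : Type*} [NormedAddCommGroup E] [InnerProductSpace ℝ E]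
    [FiniteDimensional ℝ E] [MeasurableSpace E] [BorelSpace E] (k : ℕ) :
    Integrable (fun u : E => ‖u‖ ^ k) (stdGaussian E) := by
  rcases Nat.eq_zero_or_pos k with rfl | hk
  · simp
  exact (IsGaussian.memLp_id (stdGaussian E) k (by simp)).integrable_norm_pow hk.ne'

lemma integrable_sum_sq_pow (d k : ℕ) :
    Integrable (fun y : Fin d → ℝ => (∑ i, y i ^ 2) ^ k) 𝒩[d] := by
  have h := integrable_norm_pow_stdGaussian (E := EuclideanSpace ℝ (Fin d)) (2 * k)
  rw [← map_pi_eq_stdGaussian, ← MeasurableEquiv.coe_toLp, integrable_map_equiv] at h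
  simpa [Function.comp_def, pow_mul, EuclideanSpace.real_norm_sq_eq] using h

lemma integral_sum_sq_pow_succ (d k : ℕ) :
    ∫ y, (∑ i, y i ^ 2) ^ k ∂𝒩[d + 1]
      = ∑ j ∈ range (k + 1), k.choose j * ((∫ x, x ^ (2 * j) ∂gaussianReal 0 1)
          * ∫ y, (∑ i, y i ^ 2) ^ (k - j) ∂𝒩[d]) := by
  have hsplit : ∀ y : Fin (d + 1) → ℝ, (∑ i, y i ^ 2) ^ k = ∑ j ∈ range (k + 1),
      k.choose j * (y 0 ^ (2 * j) * (∑ i, Fin.tail y i ^ 2) ^ (k - j)) := fun y => by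
    rw [Fin.sum_univ_succ, add_pow]
    exact sum_congr rfl fun j _ => by simp only [pow_mul, Fin.tail]; ring
  simp_rw [hsplit]
  rw [integral_finsetSum _ fun j _ => (integrable_mul_tail _ (integrable_pow_gaussianReal _)
    (integrable_sum_sq_pow d _)).const_mul _]
  refine sum_congr rfl fun j _ => ?_
  rw [integral_const_mul,
    integral_mul_tail _ (fun x => x ^ (2 * j)) fun z => (∑ i, z i ^ 2) ^ (k - j)]

lemma integral_sum_sq (d : ℕ) : ∫ y, ∑ i, y i ^ 2 ∂𝒩[d] = d := by
  induction d with
  | zero => simp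
  | succ d ih =>
    simpa [sum_range_succ, integral_pow_two_gaussianReal, ih] using integral_sum_sq_pow_succ d 1

lemma integral_sum_sq_sq (d : ℕ) : ∫ y, (∑ i, y i ^ 2) ^ 2 ∂𝒩[d] = d * (d + 2) := by
  induction d with
  | zero => simp
  | succ d ih =>
    rw [integral_sum_sq_pow_succ]
    simp only [sum_range_succ, range_one, sum_singleton, Nat.choose_zero_right,
      Nat.choose_succ_self_right, Nat.choose_self, Nat.cast_one, mul_zero, pow_zero,
      integral_const, probReal_univ, smul_eq_mul, mul_one, one_mul, tsub_zero, tsub_self,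
      Nat.add_one_sub_one, pow_one, ih, integral_sum_sq, integral_pow_two_gaussianReal,
      integral_pow_four_gaussianReal]
    push_cast
    ring

lemma integral_sum_sq_pow_three (d : ℕ) :
    ∫ y, (∑ i, y i ^ 2) ^ 3 ∂𝒩[d] = d * (d + 2) * (d + 4) := by
  induction d with
  | zero => simp
  | succ d ih =>
    rw [integral_sum_sq_pow_succ]
    simp only [sum_range_succ, range_one, sum_singleton, Nat.choose, Nat.cast_one, Nat.cast_ofNat,
      mul_zero, pow_zero, integral_const, probReal_univ, smul_eq_mul, mul_one, one_mul, add_zero,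
      tsub_zero, tsub_self, Nat.reduceAdd, Nat.reduceMul, Nat.reduceSub, Nat.add_one_sub_one,
      pow_one, ih, integral_sum_sq, integral_sum_sq_sq, integral_pow_two_gaussianReal,
      integral_pow_four_gaussianReal, integral_pow_six_gaussianReal]
    push_cast
    ring

lemma integral_sq_mul_sum_sq (d : ℕ) : ∫ y, y 0 ^ 2 * ∑ i, y i ^ 2 ∂𝒩[d + 1] = d + 3 := by
  have hsplit : ∀ y : Fin (d + 1) → ℝ, y 0 ^ 2 * ∑ i, y i ^ 2
      = y 0 ^ 4 * (∑ i, Fin.tail y i ^ 2) ^ 0 + y 0 ^ 2 * (∑ i, Fin.tail y i ^ 2) ^ 1 := fun y => by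
    rw [Fin.sum_univ_succ]
    simp only [Fin.tail]
    ring
  simp_rw [hsplit]
  rw [integral_add
    (integrable_mul_tail _ (integrable_pow_gaussianReal 4) (integrable_sum_sq_pow d 0))
    (integrable_mul_tail _ (integrable_pow_gaussianReal 2) (integrable_sum_sq_pow d 1)),
    integral_mul_tail _ (fun x => x ^ 4) fun z => (∑ i, z i ^ 2) ^ 0,
    integral_mul_tail _ (fun x => x ^ 2) fun z => (∑ i, z i ^ 2) ^ 1]
  simp only [pow_zero, pow_one, integral_const, probReal_univ, smul_eq_mul, mul_one, one_mul,
    integral_pow_four_gaussianReal, integral_pow_two_gaussianReal, integral_sum_sq]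
  ring

lemma exists_orthonormalBasis_fin_succ_apply_zero {E : Type*} [NormedAddCommGroup E]
    [InnerProductSpace ℝ E] [FiniteDimensional ℝ E] {v : E} (hv : ‖v‖ = 1) :
    ∃ (d : ℕ) (b : OrthonormalBasis (Fin (d + 1)) ℝ E), b 0 = v := by
  have : Nontrivial E := ⟨⟨v, 0, fun h => by simp [h] at hv⟩⟩
  obtain ⟨d, hd⟩ := Nat.exists_eq_succ_of_ne_zero (Module.finrank_pos (R := ℝ) (M := E)).ne'
  obtain ⟨b, hb⟩ := Orthonormal.exists_orthonormalBasis_extension_of_card_eq (𝕜 := ℝ)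
    (ι := Fin (d + 1)) (by simpa using hd) (v := fun _ => v) (s := {0})
    (orthonormal_subsingleton_iff.2 fun _ => hv)
  exact ⟨d, b, hb 0 rfl⟩

section StdGaussian

variable {E : Type*} [NormedAddCommGroup E] [InnerProductSpace ℝ E] [FiniteDimensional ℝ E]
  [MeasurableSpace E] [BorelSpace E]

lemma integral_stdGaussian_eq_integral_pi {ι : Type*} [Fintype ι] (b : OrthonormalBasis ι ℝ E)
    (F : E → ℝ) :
    ∫ u, F u ∂stdGaussian E
      = ∫ x, F (b.repr.symm (WithLp.toLp 2 x)) ∂Measure.pi fun _ : ι => gaussianReal 0 1 := by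
  let e : (ι → ℝ) ≃ᵐ E :=
    (MeasurableEquiv.toLp 2 (ι → ℝ)).trans b.repr.symm.toHomeomorph.toMeasurableEquiv
  have he : (fun x : ι → ℝ => ∑ i, x i • b i) = e := by
    ext x
    simp [e, b.sum_repr_symm]
  rw [stdGaussian_eq_map_pi_orthonormalBasis b, he, integral_map_equiv]
  rfl

lemma integral_norm_pow_six_stdGaussian :
    ∫ u, ‖u‖ ^ 6 ∂stdGaussian E
      = Module.finrank ℝ E * (Module.finrank ℝ E + 2) * (Module.finrank ℝ E + 4) := by
  rw [integral_stdGaussian_eq_integral_pi (stdOrthonormalBasis ℝ E)]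
  simp_rw [LinearIsometryEquiv.norm_map, show (6 : ℕ) = 2 * 3 from rfl, pow_mul,
    EuclideanSpace.real_norm_sq_eq]
  exact integral_sum_sq_pow_three _

lemma integral_inner_sq_mul_norm_sq_stdGaussian (g : E) :
    ∫ u, ⟪g, u⟫ ^ 2 * ‖u‖ ^ 2 ∂stdGaussian E = (Module.finrank ℝ E + 2) * ‖g‖ ^ 2 := by
  rcases eq_or_ne g 0 with rfl | hg
  · simp
  obtain ⟨d, b, hb⟩ := exists_orthonormalBasis_fin_succ_apply_zero (v := ‖g‖⁻¹ • g)
    (by simp [norm_smul, hg])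
  have hg_eq : g = ‖g‖ • b 0 := by simp [hb, hg]
  have hinner : ∀ w, ⟪g, b.repr.symm w⟫ = ‖g‖ * w 0 := fun w => by
    conv_lhs => rw [hg_eq, real_inner_smul_left, ← b.repr_apply_apply,
      LinearIsometryEquiv.apply_symm_apply]
  rw [integral_stdGaussian_eq_integral_pi b, Module.finrank_eq_card_basis b.toBasis]
  simp_rw [hinner, LinearIsometryEquiv.norm_map, EuclideanSpace.real_norm_sq_eq, mul_pow,
    mul_assoc, integral_const_mul]
  rw [integral_sq_mul_sum_sq, Fintype.card_fin]
  push_cast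
  ring

lemma integrable_inner_sq_mul_norm_sq_stdGaussian (g : E) :
    Integrable (fun u => ⟪g, u⟫ ^ 2 * ‖u‖ ^ 2) (stdGaussian E) := by
  refine ((integrable_norm_pow_stdGaussian 4).const_mul (‖g‖ ^ 2)).mono' (by fun_prop)
    (ae_of_all _ fun u => ?_)
  calc ‖⟪g, u⟫ ^ 2 * ‖u‖ ^ 2‖ = |⟪g, u⟫| ^ 2 * ‖u‖ ^ 2 := by simp
    _ ≤ (‖g‖ * ‖u‖) ^ 2 * ‖u‖ ^ 2 := by gcongr; exact abs_real_inner_le_norm g u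
    _ = ‖g‖ ^ 2 * ‖u‖ ^ 4 := by ring

end StdGaussian

section LipschitzGradient

variable {F : Type*} [NormedAddCommGroup F] [InnerProductSpace ℝ F] [CompleteSpace F]
  {f : F → ℝ} {L : ℝ≥0}

lemma abs_sub_sub_inner_gradient_le (hf : Differentiable ℝ f)
    (hlip : LipschitzWith L (gradient f)) (x v : F) :
    |f (x + v) - f x - ⟪gradient f x, v⟫| ≤ L / 2 * ‖v‖ ^ 2 := by
  have hderiv : ∀ t : ℝ, HasDerivAt (fun t : ℝ => f (x + t • v) - f x - t * ⟪gradient f x, v⟫)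
      ⟪gradient f (x + t • v) - gradient f x, v⟫ t := fun t => by
    have hline : HasDerivAt (fun t : ℝ => x + t • v) v t := by
      simpa using ((hasDerivAt_id t).smul_const v).const_add x
    have := (((hf _).hasGradientAt.hasFDerivAt.comp_hasDerivAt t hline).sub_const (f x)).sub
      ((hasDerivAt_id t).mul_const ⟪gradient f x, v⟫)
    exact this.congr_deriv (by simp [inner_sub_left])
  have hbound : ∀ t ∈ Set.Ico (0 : ℝ) 1,
      ‖⟪gradient f (x + t • v) - gradient f x, v⟫‖ ≤ L * ‖v‖ ^ 2 * t := fun t ht => calc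
    _ ≤ ‖gradient f (x + t • v) - gradient f x‖ * ‖v‖ := norm_inner_le_norm _ _
    _ ≤ L * ‖(x + t • v) - x‖ * ‖v‖ := by gcongr; exact hlip.norm_sub_le _ _
    _ = L * ‖v‖ ^ 2 * t := by
      rw [add_sub_cancel_left, norm_smul, Real.norm_of_nonneg ht.1]
      ring
  have := image_norm_le_of_norm_deriv_right_le_deriv_boundary (a := 0) (b := 1)
    (B := fun t => L / 2 * ‖v‖ ^ 2 * t ^ 2)
    (fun t _ => (hderiv t).continuousAt.continuousWithinAt)
    (fun t _ => (hderiv t).hasDerivWithinAt) (by simp)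
    (fun t => ((hasDerivAt_pow 2 t).const_mul _).congr_deriv (by ring)) hbound
    (Set.right_mem_Icc.2 zero_le_one)
  simpa using this

lemma sq_sub_le_of_lipschitzWith_gradient (hf : Differentiable ℝ f)
    (hlip : LipschitzWith L (gradient f)) (x v : F) :
    (f (x + v) - f x) ^ 2 ≤ 2 * ⟪gradient f x, v⟫ ^ 2 + L ^ 2 / 2 * ‖v‖ ^ 4 := by
  have htaylor := abs_sub_sub_inner_gradient_le hf hlip x v
  have hsq : (f (x + v) - f x - ⟪gradient f x, v⟫) ^ 2 ≤ (L / 2 * ‖v‖ ^ 2) ^ 2 :=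
    sq_le_sq' (abs_le.1 htaylor).1 (abs_le.1 htaylor).2
  nlinarith [sq_nonneg (f (x + v) - f x - 2 * ⟪gradient f x, v⟫)]

lemma sq_sub_smul_mul_norm_sq_le_of_lipschitzWith_gradient (hf : Differentiable ℝ f)
    (hlip : LipschitzWith L (gradient f)) (x u : F) (μ : ℝ) :
    (f (x + μ • u) - f x) ^ 2 * ‖u‖ ^ 2
      ≤ μ ^ 2 * (2 * (⟪gradient f x, u⟫ ^ 2 * ‖u‖ ^ 2) + L ^ 2 * μ ^ 2 / 2 * ‖u‖ ^ 6) := calc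
  _ ≤ (2 * ⟪gradient f x, μ • u⟫ ^ 2 + L ^ 2 / 2 * ‖μ • u‖ ^ 4) * ‖u‖ ^ 2 := by
    gcongr
    exact sq_sub_le_of_lipschitzWith_gradient hf hlip x (μ • u)
  _ = _ := by
    simp only [real_inner_smul_right, norm_smul, Real.norm_eq_abs, mul_pow,
      (by decide : Even 4).pow_abs]
    ring

end LipschitzGradient

lemma stdGaussian_eq_stdGaussian_euclideanSpace (n : ℕ) :
    stdGaussian n = ProbabilityTheory.stdGaussian (EuclideanSpace ℝ (Fin n)) := by
  rw [_root_.stdGaussian, MeasurableEquiv.coe_toLp, map_pi_eq_stdGaussian]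

theorem statement1_general {n : ℕ} (f : EuclideanSpace ℝ (Fin n) → ℝ) (Lf μ : ℝ)
    (hdiff : Differentiable ℝ f)
    (hlip : LipschitzWith Lf.toNNReal (gradient f)) :
    ∀ x, (1 / μ ^ 2) *
        ∫ u, (f (x + μ • u) - f x) ^ 2 * ‖u‖ ^ 2 ∂(stdGaussian n)
      ≤ μ ^ 2 / 2 * Lf ^ 2 * ((n : ℝ) + 6) ^ 3 + 2 * ((n : ℝ) + 4) * ‖gradient f x‖ ^ 2 := by
  intro x
  rw [stdGaussian_eq_stdGaussian_euclideanSpace]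
  set g := gradient f x
  set L : ℝ := (Lf.toNNReal : ℝ)
  have hL : L ^ 2 ≤ Lf ^ 2 := by
    simp only [L, Real.coe_toNNReal']
    exact sq_le_sq.2 (by simpa [abs_of_nonneg (le_max_right Lf 0)] using le_abs_self Lf)
  have hcube : (n : ℝ) * (n + 2) * (n + 4) ≤ (n + 6) ^ 3 := by
    nlinarith [(Nat.cast_nonneg n : (0 : ℝ) ≤ n)]
  have hint₁ := (integrable_inner_sq_mul_norm_sq_stdGaussian g).const_mul 2
  have hint₂ := (integrable_norm_pow_stdGaussian (E := EuclideanSpace ℝ (Fin n)) 6).const_mul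
    (L ^ 2 * μ ^ 2 / 2)
  calc (1 / μ ^ 2) * ∫ u, (f (x + μ • u) - f x) ^ 2 * ‖u‖ ^ 2 ∂_
      ≤ (1 / μ ^ 2) * ∫ u, μ ^ 2 * (2 * (⟪g, u⟫ ^ 2 * ‖u‖ ^ 2) + L ^ 2 * μ ^ 2 / 2 * ‖u‖ ^ 6) ∂_ :=
        mul_le_mul_of_nonneg_left (integral_mono_of_nonneg (ae_of_all _ fun u => by positivity)
          ((hint₁.add hint₂).const_mul _) (ae_of_all _ fun u =>
            sq_sub_smul_mul_norm_sq_le_of_lipschitzWith_gradient hdiff hlip x u μ)) (by positivity)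
    _ = (μ ^ 2)⁻¹ * μ ^ 2
          * (2 * ((n + 2) * ‖g‖ ^ 2) + L ^ 2 * μ ^ 2 / 2 * (n * (n + 2) * (n + 4))) := by
        rw [integral_const_mul, integral_add hint₁ hint₂, integral_const_mul, integral_const_mul,
          integral_inner_sq_mul_norm_sq_stdGaussian, integral_norm_pow_six_stdGaussian,
          finrank_euclideanSpace_fin]
        ring
    _ ≤ 2 * ((n + 2) * ‖g‖ ^ 2) + L ^ 2 * μ ^ 2 / 2 * (n * (n + 2) * (n + 4)) :=
        mul_le_of_le_one_left (by positivity) inv_mul_le_one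
    _ ≤ _ := by
        nlinarith [mul_le_mul hL hcube (by positivity) (sq_nonneg Lf), sq_nonneg μ, sq_nonneg ‖g‖]

/-- Nesterov's smoothing lemma, part (c).
If `f` has an `L_f`-Lipschitz gradient and `μ > 0`, then for every `x`,
`(1/μ²)·E_u[(f(x+μu) − f(x))²·‖u‖²] ≤ (μ²/2)·L_f²·(n+6)³ + 2(n+4)·‖∇f(x)‖²`,
where `u ~ N(0, I_n)`. -/
theorem statement1 {n : ℕ} (f : EuclideanSpace ℝ (Fin n) → ℝ) (Lf μ : ℝ)
    (hLf : 0 ≤ Lf) (hμ : 0 < μ)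
    (hdiff : Differentiable ℝ f)
    (hlip : LipschitzWith Lf.toNNReal (gradient f)) :
    ∀ x, (1 / μ ^ 2) *
        ∫ u, (f (x + μ • u) - f x) ^ 2 * ‖u‖ ^ 2 ∂(stdGaussian n)
      ≤ μ ^ 2 / 2 * Lf ^ 2 * ((n : ℝ) + 6) ^ 3 + 2 * ((n : ℝ) + 4) * ‖gradient f x‖ ^ 2 :=
  statement1_general f Lf μ hdiff hlip
end
end

section
/- (Optimality inequality for the block prox mapping.) Let x ∈ X, g ∈ ℝ^n, α > 0, and let x⁺ ∈ X be defined blockwise by U_sᵀx⁺ = P_s(U_sᵀx, U_sᵀg, α) for s = 1,…,b. Then for each s = 1,…,b: ⟨g^{(s)}, 𝒫_s(x, U_s g^{(s)}, α)⟩ ≥ ‖𝒫_s(x, U_s g^{(s)}, α)‖² + (1/α)·[χ_s(U_sᵀx⁺) − χ_s(U_sᵀx)]. -/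
/-!
The prox objective `F y = ⟪g, y⟫ + D_φ(y, x) / α + χ y` is `1/α`-strongly convex, so its
minimizer `x⁺` over `X_s` satisfies `F x⁺ + ‖x - x⁺‖² / (2α) ≤ F x = ⟪g, x⟫ + χ x`. Since
`φ` is `1`-strongly convex, `D_φ(x⁺, x) ≥ ‖x⁺ - x‖² / 2`, and together these give
`⟪g, x - x⁺⟫ ≥ ‖x - x⁺‖² / α + χ x⁺ - χ x`; scaling by `1/α` is the claim.
-/

open scoped RealInnerProductSpace
open Filter Topology Set

lemma le_of_forall_mem_Ioo_add_one_sub_mul_le {u : ℝ → ℝ} {L c d : ℝ}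
    (hu : Tendsto u (𝓝[>] 0) (𝓝 L)) (h : ∀ t ∈ Ioo (0 : ℝ) 1, u t + (1 - t) * c ≤ d) :
    L + c ≤ d := by
  have hlim : Tendsto (fun t ↦ u t + (1 - t) * c) (𝓝[>] 0) (𝓝 (L + (1 - 0) * c)) :=
    hu.add (((tendsto_const_nhds.sub tendsto_id).mul_const c).mono_left nhdsWithin_le_nhds)
  rw [sub_zero, one_mul] at hlim
  exact le_of_tendsto hlim (eventually_of_mem (Ioo_mem_nhdsGT one_pos) h)

namespace StrongConvexOn

variable {E : Type*} [NormedAddCommGroup E] [NormedSpace ℝ E] {s : Set E} {m c : ℝ}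
  {f g : E → ℝ} {x y : E}

lemma subset {t : Set E} (hf : StrongConvexOn t m f) (hst : s ⊆ t) (hs : Convex ℝ s) :
    StrongConvexOn s m f :=
  ⟨hs, fun _ hx _ hy _ _ ha hb hab ↦ hf.2 (hst hx) (hst hy) ha hb hab⟩

lemma add_convexOn (hf : StrongConvexOn s m f) (hg : ConvexOn ℝ s g) :
    StrongConvexOn s m (f + g) := by
  have h := hf.add hg.uniformConvexOn_zero
  rwa [add_zero] at h

lemma const_mul (hf : StrongConvexOn s m f) (hc : 0 ≤ c) :
    StrongConvexOn s (c * m) fun x ↦ c * f x := by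
  refine ⟨hf.1, fun x hx y hy a b ha hb hab ↦ ?_⟩
  have h := mul_le_mul_of_nonneg_left (hf.2 hx hy ha hb hab) hc
  simp only [smul_eq_mul] at h ⊢
  linear_combination h

lemma apply_add_smul_sub_le (hf : StrongConvexOn s m f) (hx : x ∈ s) (hy : y ∈ s) {t : ℝ}
    (ht₀ : 0 ≤ t) (ht₁ : t ≤ 1) :
    f (x + t • (y - x)) ≤ t * f y + (1 - t) * f x - t * (1 - t) * (m / 2 * ‖y - x‖ ^ 2) := by
  have h := hf.2 hy hx ht₀ (sub_nonneg.2 ht₁) (add_sub_cancel t 1)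
  rwa [show t • y + (1 - t) • x = x + t • (y - x) by module] at h

lemma add_sq_le_of_isMinOn (hf : StrongConvexOn s m f) (hmin : IsMinOn f s x) (hx : x ∈ s)
    (hy : y ∈ s) : f x + m / 2 * ‖y - x‖ ^ 2 ≤ f y := by
  suffices 0 + m / 2 * ‖y - x‖ ^ 2 ≤ f y - f x by linarith
  refine le_of_forall_mem_Ioo_add_one_sub_mul_le tendsto_const_nhds fun t ⟨ht₀, ht₁⟩ ↦ ?_
  have hmem : x + t • (y - x) ∈ s := by
    simpa [show t • y + (1 - t) • x = x + t • (y - x) by module]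
      using hf.1 hy hx ht₀.le (sub_nonneg.2 ht₁.le) (add_sub_cancel t 1)
  have hle : f x ≤ f (x + t • (y - x)) := isMinOn_iff.1 hmin _ hmem
  have h := hf.apply_add_smul_sub_le hx hy ht₀.le ht₁.le
  rw [zero_add, ← mul_le_mul_iff_of_pos_left ht₀]
  linear_combination hle + h

lemma add_fderiv_add_sq_le (hf : StrongConvexOn s m f) (hd : DifferentiableAt ℝ f x)
    (hx : x ∈ s) (hy : y ∈ s) :
    f x + fderiv ℝ f x (y - x) + m / 2 * ‖y - x‖ ^ 2 ≤ f y := by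
  suffices fderiv ℝ f x (y - x) + m / 2 * ‖y - x‖ ^ 2 ≤ f y - f x by linarith
  have hline : HasDerivAt (fun t : ℝ ↦ x + t • (y - x)) (y - x) 0 := by
    simpa using ((hasDerivAt_id (0 : ℝ)).smul_const (y - x)).const_add x
  have hslope := (hd.hasFDerivAt.comp_hasDerivAt_of_eq 0 hline (by simp)).tendsto_slope_zero_right
  refine le_of_forall_mem_Ioo_add_one_sub_mul_le hslope fun t ⟨ht₀, ht₁⟩ ↦ ?_
  have h := hf.apply_add_smul_sub_le hx hy ht₀.le ht₁.le
  simp only [Function.comp_apply, zero_add, zero_smul, add_zero, smul_eq_mul]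
  rw [← mul_le_mul_iff_of_pos_left ht₀, mul_add, ← mul_assoc, mul_inv_cancel₀ ht₀.ne', one_mul]
  linear_combination h

end StrongConvexOn

/-- For block `s`: `Xs = X_s`, `xp = P_s(x^{(s)}, g^{(s)}, α)`, and `(1 / α) • (x - xp)` is
`𝒫_s(x, U_s g^{(s)}, α)`. -/
theorem statement5_general {m : ℕ}
    (Xs : Set (EuclideanSpace ℝ (Fin m))) (hXsc : Convex ℝ Xs)
    (χ : EuclideanSpace ℝ (Fin m) → ℝ) (hχ : ConvexOn ℝ Set.univ χ)
    (φ : EuclideanSpace ℝ (Fin m) → ℝ) (hφd : Differentiable ℝ φ)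
    (hφsc : StrongConvexOn Set.univ 1 φ)
    (x : EuclideanSpace ℝ (Fin m)) (hx : x ∈ Xs)
    (g : EuclideanSpace ℝ (Fin m)) (α : ℝ) (hα : 0 < α)
    (xp : EuclideanSpace ℝ (Fin m)) (hxpXs : xp ∈ Xs)
    (hxpmin : ∀ y ∈ Xs,
      ⟪g, xp⟫ + (1 / α) * (φ xp - φ x - ⟪gradient φ x, xp - x⟫) + χ xp
        ≤ ⟪g, y⟫ + (1 / α) * (φ y - φ x - ⟪gradient φ x, y - x⟫) + χ y) :
    ⟪g, (1 / α) • (x - xp)⟫ ≥ ‖(1 / α) • (x - xp)‖ ^ 2 + (1 / α) * (χ xp - χ x) := by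
  set c := 1 / α
  have hc : 0 < c := one_div_pos.2 hα
  set G := gradient φ x
  set F := fun y ↦ ⟪g, y⟫ + c * (φ y - φ x - ⟪G, y - x⟫) + χ y
  have hF : StrongConvexOn Xs (c * 1) F := by
    have hlin := ((innerSL ℝ (g - c • G)).toLinearMap.convexOn hXsc).add_const
      (c * (⟪G, x⟫ - φ x))
    convert ((hφsc.subset (subset_univ Xs) hXsc).const_mul hc.le).add_convexOn
      ((hχ.subset (subset_univ Xs) hXsc).add hlin) using 1
    funext y
    simp only [F, Pi.add_apply, ContinuousLinearMap.coe_coe, innerSL_apply_apply, inner_sub_left,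
      inner_sub_right, real_inner_smul_left]
    ring
  have hprox := hF.add_sq_le_of_isMinOn (isMinOn_iff.2 hxpmin) hxpXs hx
  have hbregman := hφsc.add_fderiv_add_sq_le (hφd x) (mem_univ x) (mem_univ xp)
  rw [← inner_gradient_left, norm_sub_rev] at hbregman
  simp only [F, sub_self, inner_zero_right, mul_zero, add_zero] at hprox
  have hdescent : c * ‖x - xp‖ ^ 2 + (χ xp - χ x) ≤ ⟪g, x⟫ - ⟪g, xp⟫ := by
    linear_combination hprox + mul_le_mul_of_nonneg_left hbregman hc.le
  rw [real_inner_smul_right, inner_sub_right, norm_smul, mul_pow, Real.norm_of_nonneg hc.le]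
  linear_combination mul_le_mul_of_nonneg_left hdescent hc.le

/-- Optimality inequality for the block prox mapping, stated for a generic
block `s`.  Here `V = ℝ^{n_s}` is the block space, `Xs = X_s`, `χ = χ_s`, `φ = φ_s` is a
differentiable 1-strongly convex distance generating function, `xp = P_s(x^{(s)}, g^{(s)}, α)`
is a minimizer of `y ↦ ⟨g^{(s)},y⟩ + (1/α)D_φ(y,x^{(s)}) + χ(y)` over `X_s`, and
`(1/α)•(x − xp)` is the generalized block gradient mapping `𝒫_s(x, U_s g^{(s)}, α)`.  Then
`⟨g^{(s)}, 𝒫_s⟩ ≥ ‖𝒫_s‖² + (1/α)(χ(x⁺^{(s)}) − χ(x^{(s)}))`. -/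
theorem statement5 {m : ℕ}
    (Xs : Set (EuclideanSpace ℝ (Fin m))) (hXsc : Convex ℝ Xs) (hXscl : IsClosed Xs)
    (χ : EuclideanSpace ℝ (Fin m) → ℝ) (hχ : ConvexOn ℝ Set.univ χ)
    (φ : EuclideanSpace ℝ (Fin m) → ℝ) (hφd : Differentiable ℝ φ)
    (hφsc : StrongConvexOn Set.univ 1 φ)
    (x : EuclideanSpace ℝ (Fin m)) (hx : x ∈ Xs)
    (g : EuclideanSpace ℝ (Fin m)) (α : ℝ) (hα : 0 < α)
    (xp : EuclideanSpace ℝ (Fin m)) (hxpXs : xp ∈ Xs)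
    (hxpmin : ∀ y ∈ Xs,
      ⟪g, xp⟫ + (1 / α) * (φ xp - φ x - ⟪gradient φ x, xp - x⟫) + χ xp
        ≤ ⟪g, y⟫ + (1 / α) * (φ y - φ x - ⟪gradient φ x, y - x⟫) + χ y) :
    ⟪g, (1 / α) • (x - xp)⟫ ≥ ‖(1 / α) • (x - xp)‖ ^ 2 + (1 / α) * (χ xp - χ x) :=
  statement5_general Xs hXsc χ hχ φ hφd hφsc x hx g α hα xp hxpXs hxpmin
end
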